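/- arXiv:2206.00469 — 4 statements merged into one kernel-verified Lean document; each statement's English description precedes it below -/
import Mathlib

section
/- Let x_0 < x_1 < ... < x_n be distinct real numbers. For each i ∈ {0,...,n} let b_i : ℝ → ℝ be infinitely differentiable with the Lagrange property b_i(x_ℓ) = δ_{iℓ} for all ℓ, and let d_i : ℝ → ℝ be infinitely differentiable with d_i(x_i) = 0, d_i'(x_i) = 1, and d_i(x_ℓ) ≠ 0 for ℓ ≠ i. Define b_{i,j}(x) = (1/j!) d_i(x)^j b_i(x)^{j+1} for j ∈ ℕ. Then for all i, ℓ ∈ {0,...,n} and all j, k ∈ ℕ: the k-th iterated derivative of b_{i,j} at x_ℓ equals 0 whenever k < j, and the j-th iterated derivative of b_{i,j} at x_ℓ equals δ_{iℓ} (i.e., 1 if i = ℓ and 0 otherwise). -/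
open scoped BigOperators ContDiff

/-- The Hermite basis functions `b_{i,j}(x) = (1/j!) d_i(x)^j b_i(x)^(j+1)`. -/
noncomputable def hermiteBasis (d b : ℝ → ℝ) (j : ℕ) : ℝ → ℝ :=
  fun t => (1 / (Nat.factorial j : ℝ)) * d t ^ j * b t ^ (j + 1)

private lemma itDeriv_add {F G : ℝ → ℝ} (hF : ContDiff ℝ ∞ F) (hG : ContDiff ℝ ∞ G)
    (k : ℕ) (a : ℝ) :
    iteratedDeriv k (fun t => F t + G t) a = iteratedDeriv k F a + iteratedDeriv k G a := by
  simp_rw [← iteratedDerivWithin_univ]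
  exact iteratedDerivWithin_add (Set.mem_univ a) uniqueDiffOn_univ
    (hF.contDiffWithinAt.of_le (WithTop.coe_le_coe.mpr le_top)) (hG.contDiffWithinAt.of_le (WithTop.coe_le_coe.mpr le_top))

private lemma itDeriv_cmul {F : ℝ → ℝ} (hF : ContDiff ℝ ∞ F) (c : ℝ) (k : ℕ) (a : ℝ) :
    iteratedDeriv k (fun t => c * F t) a = c * iteratedDeriv k F a := by
  simp_rw [← iteratedDerivWithin_univ]
  exact iteratedDerivWithin_const_mul (Set.mem_univ a) uniqueDiffOn_univ c
    (hF.contDiffWithinAt.of_le (WithTop.coe_le_coe.mpr le_top))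

/-- Key Leibniz-type lemma: if `f` vanishes to order `p` and `g` to order `q` at `a`,
then `f*g` vanishes to order `p+q`, with explicit `(p+q)`-th derivative. -/
private lemma key (a : ℝ) : ∀ (k p q : ℕ) (f g : ℝ → ℝ), ContDiff ℝ ∞ f → ContDiff ℝ ∞ g →
    (∀ m < p, iteratedDeriv m f a = 0) → (∀ m < q, iteratedDeriv m g a = 0) →
    (k < p + q → iteratedDeriv k (fun t => f t * g t) a = 0) ∧
    (k = p + q → iteratedDeriv k (fun t => f t * g t) a =
      (k.choose p : ℝ) * iteratedDeriv p f a * iteratedDeriv q g a) := by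
  intro k
  induction k with
  | zero =>
    intro p q f g hf hg hfp hgq
    constructor
    · intro hk
      simp only [iteratedDeriv_zero]
      rcases Nat.eq_zero_or_pos p with hp | hp
      · have hq : 0 < q := by omega
        have := hgq 0 hq
        simp only [iteratedDeriv_zero] at this
        simp [this]
      · have := hfp 0 hp
        simp only [iteratedDeriv_zero] at this
        simp [this]
    · intro hk
      have hp : p = 0 := by omega
      have hq : q = 0 := by omega
      subst hp; subst hq
      simp [iteratedDeriv_zero]
  | succ k ih =>
    intro p q f g hf hg hfp hgq
    have hf' : ContDiff ℝ ∞ (deriv f) := (contDiff_infty_iff_deriv.mp hf).2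
    have hg' : ContDiff ℝ ∞ (deriv g) := (contDiff_infty_iff_deriv.mp hg).2
    have hder : deriv (fun t => f t * g t) = fun t => deriv f t * g t + f t * deriv g t := by
      funext t
      exact deriv_mul (hf.differentiable (by simp) t) (hg.differentiable (by simp) t)
    have hsplit : iteratedDeriv (k + 1) (fun t => f t * g t) a =
        iteratedDeriv k (fun t => deriv f t * g t) a +
        iteratedDeriv k (fun t => f t * deriv g t) a := by
      rw [iteratedDeriv_succ', hder,
        itDeriv_add ((hf'.mul hg)) ((hf.mul hg'))]
    have hfp' : ∀ m < p - 1, iteratedDeriv m (deriv f) a = 0 := by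
      intro m hm
      have := hfp (m + 1) (by omega)
      rwa [iteratedDeriv_succ'] at this
    have hgq' : ∀ m < q - 1, iteratedDeriv m (deriv g) a = 0 := by
      intro m hm
      have := hgq (m + 1) (by omega)
      rwa [iteratedDeriv_succ'] at this
    constructor
    · intro hk
      rw [hsplit]
      have h1 : iteratedDeriv k (fun t => deriv f t * g t) a = 0 := by
        rcases Nat.eq_zero_or_pos p with hp | hp
        · exact (ih 0 q (deriv f) g hf' hg (by omega) hgq).1 (by omega)
        · exact (ih (p - 1) q (deriv f) g hf' hg hfp' hgq).1 (by omega)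
      have h2 : iteratedDeriv k (fun t => f t * deriv g t) a = 0 := by
        rcases Nat.eq_zero_or_pos q with hq | hq
        · exact (ih p 0 f (deriv g) hf hg' hfp (by omega)).1 (by omega)
        · exact (ih p (q - 1) f (deriv g) hf hg' hfp hgq').1 (by omega)
      rw [h1, h2, add_zero]
    · intro hk
      rw [hsplit]
      rcases Nat.eq_zero_or_pos p with hp | hp
      · subst hp
        have hq : q = k + 1 := by omega
        have h1 : iteratedDeriv k (fun t => deriv f t * g t) a = 0 :=
          (ih 0 q (deriv f) g hf' hg (by omega) hgq).1 (by omega)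
        have h2 := (ih 0 (q - 1) f (deriv g) hf hg' (by omega) hgq').2 (by omega)
        rw [h1, h2, zero_add]
        have hdg : iteratedDeriv (q - 1) (deriv g) a = iteratedDeriv q g a := by
          have : q - 1 + 1 = q := by omega
          rw [← iteratedDeriv_succ', this]
        simp [hdg, iteratedDeriv_zero]
      · rcases Nat.eq_zero_or_pos q with hq | hq
        · subst hq
          have hp1 : p = k + 1 := by omega
          have h2 : iteratedDeriv k (fun t => f t * deriv g t) a = 0 :=
            (ih p 0 f (deriv g) hf hg' hfp (by omega)).1 (by omega)
          have h1 := (ih (p - 1) 0 (deriv f) g hf' hg hfp' (by omega)).2 (by omega)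
          rw [h1, h2, add_zero]
          have hdf : iteratedDeriv (p - 1) (deriv f) a = iteratedDeriv p f a := by
            have : p - 1 + 1 = p := by omega
            rw [← iteratedDeriv_succ', this]
          rw [hdf]
          have : k.choose (p - 1) = (k + 1).choose p := by
            subst hp1; simp
          rw [this]
        · -- p > 0, q > 0
          have h1 := (ih (p - 1) q (deriv f) g hf' hg hfp' hgq).2 (by omega)
          have h2 := (ih p (q - 1) f (deriv g) hf hg' hfp hgq').2 (by omega)
          have hdf : iteratedDeriv (p - 1) (deriv f) a = iteratedDeriv p f a := by
            have : p - 1 + 1 = p := by omega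
            rw [← iteratedDeriv_succ', this]
          have hdg : iteratedDeriv (q - 1) (deriv g) a = iteratedDeriv q g a := by
            have : q - 1 + 1 = q := by omega
            rw [← iteratedDeriv_succ', this]
          rw [h1, h2, hdf, hdg]
          have hch : (k + 1).choose p = k.choose (p - 1) + k.choose p := by
            obtain ⟨m, rfl⟩ : ∃ m, p = m + 1 := ⟨p - 1, by omega⟩
            simp [Nat.choose_succ_succ]
          rw [hch]
          push_cast
          ring

/-- Vanishing of powers: if `h(a) = 0`, then `h^p` vanishes to order `p` at `a`,
with `p`-th derivative `p! * (h'(a))^p`. -/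
private lemma pow_vanish (a : ℝ) (h : ℝ → ℝ) (hh : ContDiff ℝ ∞ h) (h0 : h a = 0) :
    ∀ p : ℕ, (∀ m < p, iteratedDeriv m (fun t => h t ^ p) a = 0) ∧
      iteratedDeriv p (fun t => h t ^ p) a = (Nat.factorial p : ℝ) * (deriv h a) ^ p := by
  intro p
  induction p with
  | zero => simp
  | succ p ih =>
    have hpow : ContDiff ℝ ∞ (fun t => h t ^ p) := hh.pow p
    have h1 : ∀ m < 1, iteratedDeriv m h a = 0 := by
      intro m hm
      interval_cases m
      simpa using h0
    have hk := key a (p + 1) 1 p h (fun t => h t ^ p) hh hpow h1 ih.1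
    constructor
    · intro m hm
      have := (key a m 1 p h (fun t => h t ^ p) hh hpow h1 ih.1).1 (by omega)
      simpa [pow_succ'] using this
    · have := hk.2 (by omega)
      simp only [pow_succ'] at *
      rw [this, ih.2]
      simp [Nat.choose_one_right, iteratedDeriv_one, Nat.factorial_succ]
      push_cast
      ring

/-- Lemma 1 of the paper: the functions `b_{i,j}` satisfy
`b_{i,j}^{(k)}(x_ℓ) = 0` for `k < j` and `b_{i,j}^{(j)}(x_ℓ) = δ_{iℓ}`. -/
theorem hermiteBasis_property
    (n : ℕ) (x : Fin (n + 1) → ℝ) (hx : StrictMono x)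
    (b d : Fin (n + 1) → ℝ → ℝ)
    (hb : ∀ i, ContDiff ℝ (⊤ : ℕ∞) (b i))
    (hbL : ∀ i ℓ, b i (x ℓ) = if i = ℓ then 1 else 0)
    (hd : ∀ i, ContDiff ℝ (⊤ : ℕ∞) (d i))
    (hd0 : ∀ i, d i (x i) = 0)
    (hd1 : ∀ i, deriv (d i) (x i) = 1)
    (hdne : ∀ i ℓ, ℓ ≠ i → d i (x ℓ) ≠ 0) :
    ∀ (i ℓ : Fin (n + 1)) (j k : ℕ),
      (k < j → iteratedDeriv k (hermiteBasis (d i) (b i) j) (x ℓ) = 0) ∧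
      iteratedDeriv j (hermiteBasis (d i) (b i) j) (x ℓ)
        = if i = ℓ then 1 else 0 := by
  intro i ℓ j k
  have hdi : ContDiff ℝ ∞ (d i) := (hd i).of_le (by simp)
  have hbi : ContDiff ℝ ∞ (b i) := (hb i).of_le (by simp)
  have hdp : ContDiff ℝ ∞ (fun t => d i t ^ j) := hdi.pow j
  have hbp : ContDiff ℝ ∞ (fun t => b i t ^ (j + 1)) := hbi.pow (j + 1)
  have hprod : ContDiff ℝ ∞ (fun t => d i t ^ j * b i t ^ (j + 1)) := hdp.mul hbp
  have hrw : ∀ m, iteratedDeriv m (hermiteBasis (d i) (b i) j) (x ℓ) =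
      (1 / (Nat.factorial j : ℝ)) *
        iteratedDeriv m (fun t => d i t ^ j * b i t ^ (j + 1)) (x ℓ) := by
    intro m
    have : hermiteBasis (d i) (b i) j =
        fun t => (1 / (Nat.factorial j : ℝ)) * (d i t ^ j * b i t ^ (j + 1)) := by
      funext t; simp [hermiteBasis, mul_assoc]
    rw [this, itDeriv_cmul hprod]
  by_cases hil : i = ℓ
  · subst hil
    have hdv := pow_vanish (x i) (d i) hdi (hd0 i) j
    have hkey := key (x i) j j 0 (fun t => d i t ^ j) (fun t => b i t ^ (j + 1))
      hdp hbp hdv.1 (by omega)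
    constructor
    · intro hkj
      have hkey' := (key (x i) k j 0 (fun t => d i t ^ j) (fun t => b i t ^ (j + 1))
        hdp hbp hdv.1 (by omega)).1 (by omega)
      rw [hrw k, hkey', mul_zero]
    · have := hkey.2 (by omega)
      rw [hrw j, this, hdv.2]
      simp [iteratedDeriv_zero, hbL i i, hd1 i, Nat.choose_self]
      field_simp
  · -- i ≠ ℓ : b i (x ℓ) = 0, so b^(j+1) vanishes to order j+1
    have hb0 : b i (x ℓ) = 0 := by simp [hbL i ℓ, hil]
    have hbv := pow_vanish (x ℓ) (b i) hbi hb0 (j + 1)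
    have main : ∀ m ≤ j, iteratedDeriv m (hermiteBasis (d i) (b i) j) (x ℓ) = 0 := by
      intro m hm
      have := (key (x ℓ) m 0 (j + 1) (fun t => d i t ^ j) (fun t => b i t ^ (j + 1))
        hdp hbp (by omega) hbv.1).1 (by omega)
      rw [hrw m, this, mul_zero]
    exact ⟨fun hkj => main k (by omega), by rw [main j le_rfl]; simp [hil]⟩
end

section
/- Let x_0 < x_1 < ... < x_n be distinct real numbers. For each i let b_i : ℝ → ℝ be infinitely differentiable with b_i(x_ℓ) = δ_{iℓ}, and let d_i : ℝ → ℝ be infinitely differentiable with d_i(x_i) = 0 and d_i'(x_i) = 1. Define b_{i,j}(x) = (1/j!) d_i(x)^j b_i(x)^{j+1}. Let m ∈ ℕ, let f_{i,j} ∈ ℝ be given data for 0 ≤ i ≤ n and 0 ≤ j ≤ m, and let r : ℕ → (ℝ → ℝ) satisfy r_0(x) = Σ_{i=0}^n f_{i,0} b_{i,0}(x) and, for each 1 ≤ j ≤ m, r_j(x) = r_{j-1}(x) + Σ_{i=0}^n (f_{i,j} − r_{j-1}^{(j)}(x_i)) b_{i,j}(x), where r_{j-1}^{(j)} is the j-th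 iterated derivative of r_{j-1}. Then r_m satisfies the Hermite conditions: for all 0 ≤ k ≤ m and 0 ≤ ℓ ≤ n, the k-th iterated derivative of r_m at x_ℓ equals f_{ℓ,k}. -/
open scoped BigOperators ContDiff

private lemma my_zero_iter (k : ℕ) (x : ℝ) :
    iteratedDeriv k (fun _ : ℝ => (0 : ℝ)) x = 0 := by
  induction k generalizing x with
  | zero => simp
  | succ k ih => rw [iteratedDeriv_succ']; simp only [deriv_const']; exact ih x

private lemma my_iteratedDeriv_add {k : ℕ} {f g : ℝ → ℝ}
    (hf : ContDiff ℝ ∞ f) (hg : ContDiff ℝ ∞ g) (x : ℝ) :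
    iteratedDeriv k (fun t => f t + g t) x = iteratedDeriv k f x + iteratedDeriv k g x := by
  have : (fun t => f t + g t) = f + g := rfl
  rw [this, ← iteratedDerivWithin_univ, ← iteratedDerivWithin_univ, ← iteratedDerivWithin_univ]
  exact iteratedDerivWithin_add (Set.mem_univ x) uniqueDiffOn_univ
    ((hf.of_le (by exact_mod_cast le_top)).contDiffWithinAt) ((hg.of_le (by exact_mod_cast le_top)).contDiffWithinAt)

private lemma my_iteratedDeriv_const_mul {k : ℕ} {f : ℝ → ℝ}
    (hf : ContDiff ℝ ∞ f) (c : ℝ) (x : ℝ) :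
    iteratedDeriv k (fun t => c * f t) x = c * iteratedDeriv k f x := by
  rw [← iteratedDerivWithin_univ, ← iteratedDerivWithin_univ]
  exact iteratedDerivWithin_const_mul (Set.mem_univ x) uniqueDiffOn_univ c
    ((hf.of_le (by exact_mod_cast le_top)).contDiffWithinAt)

private lemma my_iteratedDeriv_sum {ι : Type*} (s : Finset ι) (g : ι → ℝ → ℝ)
    (hg : ∀ i ∈ s, ContDiff ℝ ∞ (g i)) (k : ℕ) (x : ℝ) :
    iteratedDeriv k (fun t => ∑ i ∈ s, g i t) x = ∑ i ∈ s, iteratedDeriv k (g i) x := by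
  classical
  induction s using Finset.induction with
  | empty => simpa using my_zero_iter k x
  | insert a s' hns ih =>
    simp only [Finset.sum_insert hns]
    rw [my_iteratedDeriv_add (hg a (Finset.mem_insert_self a s'))
      (ContDiff.sum fun i hi => hg i (Finset.mem_insert_of_mem hi)) x,
      ih (fun i hi => hg i (Finset.mem_insert_of_mem hi))]

private lemma contDiff_deriv {f : ℝ → ℝ} (hf : ContDiff ℝ ∞ f) : ContDiff ℝ ∞ (deriv f) :=
  (contDiff_infty_iff_deriv.mp hf).2

private lemma my_diff {f : ℝ → ℝ} (hf : ContDiff ℝ ∞ f) : Differentiable ℝ f :=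
  (contDiff_infty_iff_deriv.mp hf).1

private lemma vanish {φ : ℝ → ℝ} {x₀ : ℝ} (hφ : ContDiff ℝ ∞ φ) (hφ0 : φ x₀ = 0) :
    ∀ k p (ψ : ℝ → ℝ), ContDiff ℝ ∞ ψ → k < p →
      iteratedDeriv k (fun t => φ t ^ p * ψ t) x₀ = 0 := by
  intro k
  induction k with
  | zero =>
    intro p ψ hψ hkp
    simp only [iteratedDeriv_zero]
    rw [hφ0, zero_pow (by omega : p ≠ 0), zero_mul]
  | succ k ih =>
    intro p ψ hψ hkp
    obtain ⟨q, rfl⟩ : ∃ q, p = q + 1 := ⟨p - 1, by omega⟩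
    rw [iteratedDeriv_succ']
    have hder : deriv (fun t => φ t ^ (q + 1) * ψ t) =
        fun t => φ t ^ q * (((q : ℝ) + 1) * deriv φ t * ψ t + φ t * deriv ψ t) := by
      funext t
      rw [deriv_fun_mul ((my_diff hφ t).fun_pow _) (my_diff hψ t),
        deriv_fun_pow (my_diff hφ t) _]
      push_cast
      ring
    rw [hder]
    exact ih q (fun t => ((q : ℝ) + 1) * deriv φ t * ψ t + φ t * deriv ψ t)
      (((contDiff_const.mul (contDiff_deriv hφ)).mul hψ).add (hφ.mul (contDiff_deriv hψ)))
      (by omega)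

private lemma factor {d : ℝ → ℝ} {x₀ : ℝ} (hd : ContDiff ℝ ∞ d) (hd0 : d x₀ = 0)
    (hd1 : deriv d x₀ = 1) :
    ∀ j (ψ : ℝ → ℝ), ContDiff ℝ ∞ ψ →
      iteratedDeriv j (fun t => d t ^ j * ψ t) x₀ = (Nat.factorial j : ℝ) * ψ x₀ := by
  intro j
  induction j with
  | zero => intro ψ hψ; simp
  | succ j ih =>
    intro ψ hψ
    rw [iteratedDeriv_succ']
    have hder : deriv (fun t => d t ^ (j + 1) * ψ t) =
        fun t => d t ^ j * (((j : ℝ) + 1) * deriv d t * ψ t + d t * deriv ψ t) := by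
      funext t
      rw [deriv_fun_mul ((my_diff hd t).fun_pow _) (my_diff hψ t),
        deriv_fun_pow (my_diff hd t) _]
      push_cast
      ring
    rw [hder, ih (fun t => ((j : ℝ) + 1) * deriv d t * ψ t + d t * deriv ψ t)
      (((contDiff_const.mul (contDiff_deriv hd)).mul hψ).add (hd.mul (contDiff_deriv hψ)))]
    rw [hd0, hd1, Nat.factorial_succ]
    push_cast
    ring

private lemma hermiteBasis_contDiff {d b : ℝ → ℝ} (hd : ContDiff ℝ ∞ d) (hb : ContDiff ℝ ∞ b)
    (j : ℕ) : ContDiff ℝ ∞ (hermiteBasis d b j) :=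
  (contDiff_const.mul (hd.pow j)).mul (hb.pow (j + 1))

private lemma hermiteBasis_iteratedDeriv_ne {d b : ℝ → ℝ} {y : ℝ}
    (hd : ContDiff ℝ ∞ d) (hb : ContDiff ℝ ∞ b) (hby : b y = 0) {k j : ℕ} (hkj : k ≤ j) :
    iteratedDeriv k (hermiteBasis d b j) y = 0 := by
  have heq : hermiteBasis d b j =
      fun t => b t ^ (j + 1) * ((1 / (Nat.factorial j : ℝ)) * d t ^ j) := by
    funext t; simp only [hermiteBasis]; ring
  rw [heq]
  exact vanish hb hby k (j + 1) _ (contDiff_const.mul (hd.pow j)) (by omega)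

private lemma hermiteBasis_iteratedDeriv_lt {d b : ℝ → ℝ} {y : ℝ}
    (hd : ContDiff ℝ ∞ d) (hb : ContDiff ℝ ∞ b) (hdy : d y = 0) {k j : ℕ} (hkj : k < j) :
    iteratedDeriv k (hermiteBasis d b j) y = 0 := by
  have heq : hermiteBasis d b j =
      fun t => d t ^ j * ((1 / (Nat.factorial j : ℝ)) * b t ^ (j + 1)) := by
    funext t; simp only [hermiteBasis]; ring
  rw [heq]
  exact vanish hd hdy k j _ (contDiff_const.mul (hb.pow (j + 1))) hkj

private lemma hermiteBasis_iteratedDeriv_eq {d b : ℝ → ℝ} {y : ℝ}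
    (hd : ContDiff ℝ ∞ d) (hb : ContDiff ℝ ∞ b) (hdy : d y = 0) (hdy1 : deriv d y = 1)
    (hby : b y = 1) (j : ℕ) :
    iteratedDeriv j (hermiteBasis d b j) y = 1 := by
  have heq : hermiteBasis d b j =
      fun t => d t ^ j * ((1 / (Nat.factorial j : ℝ)) * b t ^ (j + 1)) := by
    funext t; simp only [hermiteBasis]; ring
  rw [heq, factor hd hdy hdy1 j _ (contDiff_const.mul (hb.pow (j + 1))), hby, one_pow]
  have := Nat.factorial_pos j
  field_simp

/-- main theorem of the paper: the iteratively constructed `r_m`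
satisfies the Hermite conditions `r_m^{(k)}(x_ℓ) = f_{ℓ,k}` for `k ≤ m`. -/
theorem iterative_hermite_interpolation
    (n m : ℕ) (x : Fin (n + 1) → ℝ) (hx : StrictMono x)
    (b d : Fin (n + 1) → ℝ → ℝ)
    (hb : ∀ i, ContDiff ℝ (⊤ : ℕ∞) (b i))
    (hbL : ∀ i ℓ, b i (x ℓ) = if i = ℓ then 1 else 0)
    (hd : ∀ i, ContDiff ℝ (⊤ : ℕ∞) (d i))
    (hd0 : ∀ i, d i (x i) = 0)
    (hd1 : ∀ i, deriv (d i) (x i) = 1)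
    (f : Fin (n + 1) → ℕ → ℝ)
    (r : ℕ → ℝ → ℝ)
    (hr0 : r 0 = fun t => ∑ i, f i 0 * hermiteBasis (d i) (b i) 0 t)
    (hrstep : ∀ j, 1 ≤ j → j ≤ m →
      r j = fun t => r (j - 1) t +
        ∑ i, (f i j - iteratedDeriv j (r (j - 1)) (x i)) * hermiteBasis (d i) (b i) j t) :
    ∀ k, k ≤ m → ∀ ℓ, iteratedDeriv k (r m) (x ℓ) = f ℓ k := by
  classical
  have hb' : ∀ i, ContDiff ℝ ∞ (b i) := fun i => (hb i).of_le (by simp)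
  have hd' : ∀ i, ContDiff ℝ ∞ (d i) := fun i => (hd i).of_le (by simp)
  have hbasis : ∀ (i ℓ : Fin (n + 1)) (k j : ℕ), k ≤ j →
      iteratedDeriv k (hermiteBasis (d i) (b i) j) (x ℓ) =
        if i = ℓ ∧ k = j then 1 else 0 := by
    intro i ℓ k j hkj
    by_cases hiℓ : i = ℓ
    · subst hiℓ
      rcases lt_or_eq_of_le hkj with hlt | heq
      · rw [hermiteBasis_iteratedDeriv_lt (hd' i) (hb' i) (hd0 i) hlt,
          if_neg (by rintro ⟨_, h⟩; omega)]
      · subst heq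
        rw [hermiteBasis_iteratedDeriv_eq (hd' i) (hb' i) (hd0 i) (hd1 i) (by simp [hbL]),
          if_pos ⟨rfl, rfl⟩]
    · rw [hermiteBasis_iteratedDeriv_ne (hd' i) (hb' i) (by simp [hbL, hiℓ]) hkj,
        if_neg (by rintro ⟨h, _⟩; exact hiℓ h)]
  have main : ∀ j, j ≤ m → ContDiff ℝ ∞ (r j) ∧
      (∀ k, k ≤ j → ∀ ℓ, iteratedDeriv k (r j) (x ℓ) = f ℓ k) := by
    intro j
    induction j with
    | zero =>
      intro _
      constructor
      · rw [hr0]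
        exact ContDiff.sum fun i _ => contDiff_const.mul
          (hermiteBasis_contDiff (hd' i) (hb' i) 0)
      · intro k hk ℓ
        interval_cases k
        rw [hr0, iteratedDeriv_zero]
        have h1 : ∀ i : Fin (n + 1), f i 0 * hermiteBasis (d i) (b i) 0 (x ℓ) =
            if i = ℓ then f ℓ 0 else 0 := by
          intro i
          simp only [hermiteBasis, pow_zero, pow_one, Nat.factorial_zero, hbL]
          by_cases hiℓ : i = ℓ <;> simp [hiℓ]
        simp only [h1, Finset.sum_ite_eq' Finset.univ ℓ, Finset.mem_univ, if_pos]
    | succ j ih =>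
      intro hjm
      have hstep := hrstep (j + 1) (by omega) hjm
      obtain ⟨hsm, hval⟩ := ih (by omega)
      simp only [Nat.add_sub_cancel] at hstep
      have hgsm : ∀ i : Fin (n + 1), ContDiff ℝ ∞
          (fun t => (f i (j + 1) - iteratedDeriv (j + 1) (r j) (x i)) *
            hermiteBasis (d i) (b i) (j + 1) t) :=
        fun i => contDiff_const.mul (hermiteBasis_contDiff (hd' i) (hb' i) (j + 1))
      have hsumsm : ContDiff ℝ ∞ (fun t => ∑ i, (f i (j + 1) -
          iteratedDeriv (j + 1) (r j) (x i)) * hermiteBasis (d i) (b i) (j + 1) t) :=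
        ContDiff.sum fun i _ => hgsm i
      constructor
      · rw [hstep]; exact hsm.add hsumsm
      · intro k hk ℓ
        rw [hstep, my_iteratedDeriv_add hsm hsumsm,
          my_iteratedDeriv_sum Finset.univ _ (fun i _ => hgsm i)]
        have hconst : ∀ i : Fin (n+1), iteratedDeriv k
            (fun t => (f i (j + 1) - iteratedDeriv (j + 1) (r j) (x i)) *
              hermiteBasis (d i) (b i) (j+1) t) (x ℓ) =
            (f i (j + 1) - iteratedDeriv (j + 1) (r j) (x i)) *
              iteratedDeriv k (hermiteBasis (d i) (b i) (j+1)) (x ℓ) :=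
          fun i => my_iteratedDeriv_const_mul
            (hermiteBasis_contDiff (hd' i) (hb' i) (j+1)) _ (x ℓ)
        simp only [hconst]
        rcases lt_or_eq_of_le hk with hlt | heq
        · have h0 : ∀ i : Fin (n+1), (f i (j+1) - iteratedDeriv (j+1) (r j) (x i)) *
              iteratedDeriv k (hermiteBasis (d i) (b i) (j+1)) (x ℓ) = 0 := by
            intro i
            rw [hbasis i ℓ k (j+1) (by omega), if_neg (by rintro ⟨_, h⟩; omega), mul_zero]
          simp only [h0, Finset.sum_const_zero, add_zero]
          exact hval k (by omega) ℓ
        · subst heq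
          have h1 : ∀ i : Fin (n+1), (f i (j+1) - iteratedDeriv (j+1) (r j) (x i)) *
              iteratedDeriv (j+1) (hermiteBasis (d i) (b i) (j+1)) (x ℓ) =
              if i = ℓ then f ℓ (j+1) - iteratedDeriv (j+1) (r j) (x ℓ) else 0 := by
            intro i
            rw [hbasis i ℓ (j+1) (j+1) le_rfl]
            by_cases hiℓ : i = ℓ <;> simp [hiℓ]
          simp only [h1, Finset.sum_ite_eq' Finset.univ ℓ, Finset.mem_univ, if_pos]
          ring
  intro k hk ℓ
  exact (main m le_rfl).2 k hk ℓ
end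

section
/- Let n ≥ 1 be odd and let 0 ≤ θ_0 < θ_1 < ... < θ_{n-1} < 2π be real nodes. Define β_i(θ) = ((−1)^i Π_{k≠i} sin((θ − θ_k)/2)) / (Σ_{j=0}^{n-1} (−1)^j Π_{k≠j} sin((θ − θ_k)/2)) and the trigonometric Hermite basis b_{i,j}(θ) = (2^j/j!) sin^j((θ − θ_i)/2) · β_i(θ)^{j+1}. Then for all i, ℓ ∈ {0,...,n-1} and all j, k ∈ ℕ: the k-th iterated derivative of b_{i,j} at θ_ℓ equals 0 whenever k < j, and the j-th iterated derivative of b_{i,j} at θ_ℓ equals δ_{iℓ}. -/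
/-!
At a node `θ ℓ` only the `ℓ`-th summand of the denominator of `β_i` survives, and it is nonzero
because distinct nodes in `[0, 2π)` have `sin ((θ ℓ - θ k) / 2) ≠ 0`; so `β_i` is smooth near every
node and `β_i (θ i) = 1`. Near `θ ℓ` we can therefore write `b_{i,j} = sin ((t - θ ℓ) / 2) ^ m * g`
with `g` smooth, where `m = j` if `ℓ = i` and `m = j + 1` otherwise (then `β_i` itself contains the
factor `sin ((t - θ ℓ) / 2)`). For smooth `s` with `s a = 0`, the derivatives of `s ^ m * g` of
order `k < m` vanish at `a` and the `m`-th one is `m! * s'(a) ^ m * g a`; for `ℓ = i` this is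
`j! * 2⁻ʲ * 2ʲ / j! = 1`.
-/

/-- The pole-free form of Berrut's trigonometric basis function for odd `n`. -/
noncomputable def berrutBasisOdd (n : ℕ) (θ : Fin n → ℝ) (i : Fin n) (t : ℝ) : ℝ :=
  ((-1 : ℝ) ^ (i : ℕ) * ∏ k ∈ Finset.univ.erase i, Real.sin ((t - θ k) / 2)) /
    (∑ j : Fin n, (-1 : ℝ) ^ (j : ℕ) *
      ∏ k ∈ Finset.univ.erase j, Real.sin ((t - θ k) / 2))

/-- The trigonometric Hermite basis `b_{i,j}(θ) = (2^j/j!) sin^j((θ−θ_i)/2) β_i(θ)^(j+1)`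
for odd `n`. -/
noncomputable def trigHermiteBasisOdd (n : ℕ) (θ : Fin n → ℝ) (i : Fin n) (j : ℕ)
    (t : ℝ) : ℝ :=
  ((2 : ℝ) ^ j / (Nat.factorial j : ℝ)) * Real.sin ((t - θ i) / 2) ^ j *
    berrutBasisOdd n θ i t ^ (j + 1)

open scoped ContDiff Nat
open Finset Real

theorem Real.sin_half_sub_ne_zero {x y : ℝ} (hx₀ : 0 ≤ x) (hx : x < 2 * π) (hy₀ : 0 ≤ y)
    (hy : y < 2 * π) (hxy : x ≠ y) : sin ((x - y) / 2) ≠ 0 := by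
  intro h
  have := (sin_eq_zero_iff_of_lt_of_lt (by linarith) (by linarith)).mp h
  exact hxy (by linarith)

theorem Real.deriv_sin_half_sub_self (c : ℝ) : deriv (fun t => sin ((t - c) / 2)) c = 1 / 2 := by
  simpa using (((hasDerivAt_id c).sub_const c).div_const 2).sin.deriv

section

variable {𝕜 : Type*} [NontriviallyNormedField 𝕜] {s : 𝕜 → 𝕜} {U : Set 𝕜} {a : 𝕜}

theorem iteratedDeriv_pow_mul_of_eq_zero (hU : IsOpen U) (ha : a ∈ U)
    (hs : ContDiffOn 𝕜 ∞ s U) (hsa : s a = 0) (m : ℕ) :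
    ∀ g : 𝕜 → 𝕜, ContDiffOn 𝕜 ∞ g U →
      (∀ k < m, iteratedDeriv k (fun t => s t ^ m * g t) a = 0) ∧
      iteratedDeriv m (fun t => s t ^ m * g t) a = m ! * deriv s a ^ m * g a := by
  induction m with
  | zero => intro g _; simp
  | succ m ih =>
    intro g hg
    have hs' := hs.deriv_of_isOpen hU (m := ∞) le_rfl
    have hg' := hg.deriv_of_isOpen hU (m := ∞) le_rfl
    set g₁ : 𝕜 → 𝕜 := fun t => (m + 1) * deriv s t * g t + s t * deriv g t
    have hg₁ : ContDiffOn 𝕜 ∞ g₁ U :=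
      ((contDiffOn_const.mul hs').mul hg).add (hs.mul hg')
    have hderiv : deriv (fun t => s t ^ (m + 1) * g t) =ᶠ[nhds a] fun t => s t ^ m * g₁ t := by
      filter_upwards [hU.mem_nhds ha] with t ht
      have hds := (hs.differentiableOn (by simp) t ht).differentiableAt (hU.mem_nhds ht)
      have hdg := (hg.differentiableOn (by simp) t ht).differentiableAt (hU.mem_nhds ht)
      refine ((hds.hasDerivAt.pow (m + 1)).mul hdg.hasDerivAt).deriv.trans ?_
      simp only [g₁, Pi.pow_apply]
      push_cast
      ring
    have hshift (k : ℕ) : iteratedDeriv (k + 1) (fun t => s t ^ (m + 1) * g t) a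
        = iteratedDeriv k (fun t => s t ^ m * g₁ t) a := by
      rw [iteratedDeriv_succ']
      exact hderiv.iteratedDeriv_eq k
    obtain ⟨hlow, htop⟩ := ih g₁ hg₁
    refine ⟨fun k hk => ?_, ?_⟩
    · cases k with
      | zero => simp [hsa]
      | succ k => rw [hshift]; exact hlow k (by omega)
    · rw [hshift, htop]
      simp only [g₁, hsa, zero_mul, add_zero, Nat.factorial_succ]
      push_cast
      ring

end

section Berrut

variable {n : ℕ} {θ : Fin n → ℝ} {i ℓ : Fin n}

noncomputable def berrutNumer (θ : Fin n → ℝ) (i : Fin n) (t : ℝ) : ℝ :=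
  (-1) ^ (i : ℕ) * ∏ k ∈ univ.erase i, sin ((t - θ k) / 2)

noncomputable def berrutDenom (θ : Fin n → ℝ) (t : ℝ) : ℝ :=
  ∑ j, berrutNumer θ j t

theorem berrutBasisOdd_eq_div (t : ℝ) :
    berrutBasisOdd n θ i t = berrutNumer θ i t / berrutDenom θ t := rfl

theorem contDiff_berrutNumer : ContDiff ℝ ∞ (berrutNumer θ i) := by
  unfold berrutNumer; fun_prop

theorem contDiff_berrutDenom : ContDiff ℝ ∞ (berrutDenom θ) := by
  unfold berrutDenom
  exact ContDiff.sum fun j _ => contDiff_berrutNumer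

theorem isOpen_berrutDenom_ne_zero : IsOpen {t | berrutDenom θ t ≠ 0} :=
  isOpen_ne_fun contDiff_berrutDenom.continuous continuous_const

theorem contDiffOn_berrutBasisOdd :
    ContDiffOn ℝ ∞ (berrutBasisOdd n θ i) {t | berrutDenom θ t ≠ 0} :=
  contDiff_berrutNumer.contDiffOn.div contDiff_berrutDenom.contDiffOn fun _ ht => ht

theorem berrutNumer_eq_sin_mul (h : ℓ ≠ i) (t : ℝ) :
    berrutNumer θ i t =
      sin ((t - θ ℓ) / 2) * ((-1) ^ (i : ℕ) * ∏ k ∈ (univ.erase i).erase ℓ, sin ((t - θ k) / 2)) := by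
  rw [berrutNumer, ← mul_prod_erase _ _ (mem_erase.mpr ⟨h, mem_univ ℓ⟩)]
  ring

theorem berrutNumer_apply_of_ne (h : ℓ ≠ i) : berrutNumer θ i (θ ℓ) = 0 := by
  simp [berrutNumer_eq_sin_mul h]

theorem berrutDenom_apply : berrutDenom θ (θ ℓ) = berrutNumer θ ℓ (θ ℓ) :=
  sum_eq_single_of_mem ℓ (mem_univ ℓ) fun _ _ h => berrutNumer_apply_of_ne h.symm

theorem berrutBasisOdd_apply_self (hD : berrutDenom θ (θ i) ≠ 0) :
    berrutBasisOdd n θ i (θ i) = 1 := by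
  rw [berrutBasisOdd_eq_div, ← berrutDenom_apply, div_self hD]

theorem berrutDenom_apply_ne_zero (hθ : Function.Injective θ) (hθ₀ : ∀ k, 0 ≤ θ k)
    (hθ₂ : ∀ k, θ k < 2 * π) (ℓ : Fin n) : berrutDenom θ (θ ℓ) ≠ 0 := by
  rw [berrutDenom_apply, berrutNumer]
  refine mul_ne_zero (by simp) (prod_ne_zero_iff.mpr fun k hk => ?_)
  exact sin_half_sub_ne_zero (hθ₀ ℓ) (hθ₂ ℓ) (hθ₀ k) (hθ₂ k)
    (hθ.ne (mem_erase.mp hk).1.symm)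

end Berrut

section Hermite

variable {n : ℕ} {θ : Fin n → ℝ} {i ℓ : Fin n} {j : ℕ}

theorem iteratedDeriv_trigHermiteBasisOdd_self (hD : berrutDenom θ (θ i) ≠ 0) :
    (∀ k < j, iteratedDeriv k (trigHermiteBasisOdd n θ i j) (θ i) = 0) ∧
      iteratedDeriv j (trigHermiteBasisOdd n θ i j) (θ i) = 1 := by
  have hform : trigHermiteBasisOdd n θ i j =
      fun t => sin ((t - θ i) / 2) ^ j * (2 ^ j / j ! * berrutBasisOdd n θ i t ^ (j + 1)) := by
    funext t; rw [trigHermiteBasisOdd]; ring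
  obtain ⟨hlow, htop⟩ := iteratedDeriv_pow_mul_of_eq_zero (s := fun t => sin ((t - θ i) / 2))
    isOpen_berrutDenom_ne_zero hD (by fun_prop) (by simp) j _
    (contDiffOn_const.mul (contDiffOn_berrutBasisOdd.pow _))
  refine ⟨hform ▸ hlow, ?_⟩
  rw [hform, htop, deriv_sin_half_sub_self, berrutBasisOdd_apply_self hD]
  field_simp
  rw [← mul_pow]
  norm_num

theorem iteratedDeriv_trigHermiteBasisOdd_of_ne (h : i ≠ ℓ) (hD : berrutDenom θ (θ ℓ) ≠ 0) :
    ∀ k ≤ j, iteratedDeriv k (trigHermiteBasisOdd n θ i j) (θ ℓ) = 0 := by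
  set r : ℝ → ℝ := fun t => (-1) ^ (i : ℕ) * ∏ k ∈ (univ.erase i).erase ℓ, sin ((t - θ k) / 2)
  have hform : trigHermiteBasisOdd n θ i j = fun t => sin ((t - θ ℓ) / 2) ^ (j + 1) *
      (2 ^ j / j ! * sin ((t - θ i) / 2) ^ j * (r t / berrutDenom θ t) ^ (j + 1)) := by
    funext t
    rw [trigHermiteBasisOdd, berrutBasisOdd_eq_div, berrutNumer_eq_sin_mul h.symm, mul_div_assoc]
    ring
  have hr : ContDiffOn ℝ ∞ (fun t => r t / berrutDenom θ t) {t | berrutDenom θ t ≠ 0} :=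
    (by fun_prop : ContDiff ℝ ∞ r).contDiffOn.div contDiff_berrutDenom.contDiffOn fun _ ht => ht
  intro k hk
  rw [hform]
  exact (iteratedDeriv_pow_mul_of_eq_zero isOpen_berrutDenom_ne_zero hD (by fun_prop) (by simp)
    (j + 1) _ (by fun_prop)).1 k (Nat.lt_succ_of_le hk)

end Hermite

theorem trigHermiteBasisOdd_property_general
    (n : ℕ)
    (θ : Fin n → ℝ) (hθ : StrictMono θ)
    (hθ0 : ∀ k, 0 ≤ θ k) (hθ2π : ∀ k, θ k < 2 * Real.pi) :
    ∀ (i ℓ : Fin n) (j k : ℕ),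
      (k < j → iteratedDeriv k (trigHermiteBasisOdd n θ i j) (θ ℓ) = 0) ∧
      iteratedDeriv j (trigHermiteBasisOdd n θ i j) (θ ℓ)
        = if i = ℓ then 1 else 0 := by
  intro i ℓ j k
  have hD := berrutDenom_apply_ne_zero hθ.injective hθ0 hθ2π ℓ
  obtain rfl | h := eq_or_ne i ℓ
  · obtain ⟨hlow, htop⟩ := iteratedDeriv_trigHermiteBasisOdd_self (j := j) hD
    exact ⟨hlow k, by simpa using htop⟩
  · have hvanish := iteratedDeriv_trigHermiteBasisOdd_of_ne (j := j) h hD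
    exact ⟨fun hk => hvanish k hk.le, by simpa [h] using hvanish j le_rfl⟩

/-- for odd `n`, the trigonometric Hermite basis satisfies
`b_{i,j}^{(k)}(θ_ℓ) = 0` for `k < j` and `b_{i,j}^{(j)}(θ_ℓ) = δ_{iℓ}`. -/
theorem trigHermiteBasisOdd_property
    (n : ℕ) (hn : 1 ≤ n) (hodd : Odd n)
    (θ : Fin n → ℝ) (hθ : StrictMono θ)
    (hθ0 : ∀ k, 0 ≤ θ k) (hθ2π : ∀ k, θ k < 2 * Real.pi) :
    ∀ (i ℓ : Fin n) (j k : ℕ),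
      (k < j → iteratedDeriv k (trigHermiteBasisOdd n θ i j) (θ ℓ) = 0) ∧
      iteratedDeriv j (trigHermiteBasisOdd n θ i j) (θ ℓ)
        = if i = ℓ then 1 else 0 :=
  trigHermiteBasisOdd_property_general n θ hθ hθ0 hθ2π
end

section
/- Let n ≥ 1 be odd, let 0 ≤ θ_0 < θ_1 < ... < θ_{n-1} < 2π be real nodes, define β_i(θ) = ((−1)^i Π_{k≠i} sin((θ − θ_k)/2)) / (Σ_{j=0}^{n-1} (−1)^j Π_{k≠j} sin((θ − θ_k)/2)) and b_{i,j}(θ) = (2^j/j!) sin^j((θ − θ_i)/2) · β_i(θ)^{j+1}. Let θ ∈ ℝ satisfy sin((θ − θ_k)/2) ≠ 0 for all k and S(θ) := Σ_{k=0}^{n-1} (−1)^k / sin((θ − θ_k)/2) ≠ 0. Then b_{i,j}(θ) = (2^j (−1)^{i(j+1)} / j!) · (1/sin((θ − θ_i)/2)) / S(θ)^{j+1}. -/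
open scoped BigOperators

/-
Writing `s_k = sin((t - θ_k)/2)` and `P = ∏ s_k`, each product `∏_{k ≠ m} s_k` equals `P / s_m`, so
the factor `P` cancels from numerator and denominator of Berrut's basis, leaving the barycentric
form `β_i = ((-1)^i / s_i) / S`. Substituting this into `b_{i,j}` collapses `s_i^j / s_i^{j+1}`
to `1 / s_i`.
-/

section Barycentric

variable {ι K : Type*} [Fintype ι] [DecidableEq ι] [Field K] {s : ι → K}

theorem Finset.prod_univ_erase_eq_div (hs : ∀ k, s k ≠ 0) (m : ι) :
    ∏ k ∈ Finset.univ.erase m, s k = (∏ k, s k) / s m := by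
  rw [eq_div_iff (hs m), Finset.prod_erase_mul _ _ (Finset.mem_univ m)]

theorem Finset.sum_mul_prod_univ_erase (hs : ∀ k, s k ≠ 0) (c : ι → K) :
    ∑ m, c m * ∏ k ∈ Finset.univ.erase m, s k = (∏ k, s k) * ∑ m, c m / s m := by
  simp_rw [Finset.mul_sum, Finset.prod_univ_erase_eq_div hs]
  exact Finset.sum_congr rfl fun m _ => by ring

theorem div_sum_mul_prod_univ_erase (hs : ∀ k, s k ≠ 0) (c : ι → K) (i : ι) :
    (c i * ∏ k ∈ Finset.univ.erase i, s k) / ∑ m, c m * ∏ k ∈ Finset.univ.erase m, s k =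
      (c i / s i) / ∑ m, c m / s m := by
  have hP : ∏ k, s k ≠ 0 := Finset.prod_ne_zero_iff.mpr fun k _ => hs k
  rw [Finset.sum_mul_prod_univ_erase hs, Finset.prod_univ_erase_eq_div hs, mul_div_left_comm,
    mul_div_mul_left _ _ hP]

end Barycentric

theorem berrutBasisOdd_eq_div_sum {n : ℕ} {θ : Fin n → ℝ} {t : ℝ}
    (ht : ∀ k, Real.sin ((t - θ k) / 2) ≠ 0) (i : Fin n) :
    berrutBasisOdd n θ i t = ((-1 : ℝ) ^ (i : ℕ) / Real.sin ((t - θ i) / 2)) /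
      ∑ k : Fin n, (-1 : ℝ) ^ (k : ℕ) / Real.sin ((t - θ k) / 2) :=
  div_sum_mul_prod_univ_erase ht (fun k : Fin n => (-1 : ℝ) ^ (k : ℕ)) i

theorem trigHermiteBasisOdd_closed_form_general
    (n : ℕ)
    (θ : Fin n → ℝ)
    (t : ℝ) (ht : ∀ k, Real.sin ((t - θ k) / 2) ≠ 0) :
    ∀ (i : Fin n) (j : ℕ),
      trigHermiteBasisOdd n θ i j t
        = ((2 : ℝ) ^ j * (-1 : ℝ) ^ ((i : ℕ) * (j + 1)) / (Nat.factorial j : ℝ)) *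
            (1 / Real.sin ((t - θ i) / 2)) /
            (∑ k : Fin n, (-1 : ℝ) ^ (k : ℕ) / Real.sin ((t - θ k) / 2)) ^ (j + 1) := by
  intro i j
  have hsi := ht i
  rw [trigHermiteBasisOdd, berrutBasisOdd_eq_div_sum ht, div_pow, div_pow, pow_mul]
  field_simp
  ring

/-- for odd `n`, the closed form of the trigonometric Hermite basis:
`b_{i,j}(θ) = (2^j (−1)^{i(j+1)} / j!) csc((θ−θ_i)/2) / S(θ)^{j+1}` where
`S(θ) = Σ_k (−1)^k / sin((θ−θ_k)/2)`. -/
theorem trigHermiteBasisOdd_closed_form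
    (n : ℕ) (hn : 1 ≤ n) (hodd : Odd n)
    (θ : Fin n → ℝ) (hθ : StrictMono θ)
    (hθ0 : ∀ k, 0 ≤ θ k) (hθ2π : ∀ k, θ k < 2 * Real.pi)
    (t : ℝ) (ht : ∀ k, Real.sin ((t - θ k) / 2) ≠ 0)
    (hS : ∑ k : Fin n, (-1 : ℝ) ^ (k : ℕ) / Real.sin ((t - θ k) / 2) ≠ 0) :
    ∀ (i : Fin n) (j : ℕ),
      trigHermiteBasisOdd n θ i j t
        = ((2 : ℝ) ^ j * (-1 : ℝ) ^ ((i : ℕ) * (j + 1)) / (Nat.factorial j : ℝ)) *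
            (1 / Real.sin ((t - θ i) / 2)) /
            (∑ k : Fin n, (-1 : ℝ) ^ (k : ℕ) / Real.sin ((t - θ k) / 2)) ^ (j + 1) :=
  trigHermiteBasisOdd_closed_form_general n θ t ht
end
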